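/- arXiv:1802.01302 — 4 statements merged into one kernel-verified Lean document; each statement's English description precedes it below -/
import Mathlib

section
/- For every s > 0, average-case L₂-approximation with Gaussian kernels is (s,1)-weakly tractable if and only if it is weakly tractable, if and only if lim_{j→∞} γ_j² = 0. -/
open Filter

/-- `omegaOf x` is `ω` for shape parameter squared `x = γ²`:
`ω = 2γ²/(1+2γ²+√(1+4γ²))`. -/
noncomputable def omegaOf (x : ℝ) : ℝ := 2 * x / (1 + 2 * x + Real.sqrt (1 + 4 * x))

/-- Eigenvalues `λ_d(j) = ∏_{k=1}^d (1-ω_k) ω_k^{j_k}`, where `g k = γ_{k+1}²`. -/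
noncomputable def eigen (g : ℕ → ℝ) (d : ℕ) (j : Fin d → ℕ) : ℝ :=
  ∏ k : Fin d, (1 - omegaOf (g (k : ℕ))) * omegaOf (g (k : ℕ)) ^ (j k)

/-- The information complexity `n(ε,d)`: the least `n` such that some finite set `S` of
multi-indices with `|S| ≤ n` satisfies `∑_{j ∉ S} λ_d(j) ≤ ε²`. -/
noncomputable def infoComp (g : ℕ → ℝ) (ε : ℝ) (d : ℕ) : ℕ :=
  sInf {n : ℕ | ∃ S : Finset (Fin d → ℕ), S.card ≤ n ∧
    (∑' j : {j : Fin d → ℕ // j ∉ S}, eigen g d j.1) ≤ ε ^ 2}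

/-- `(s,t)`-weak tractability: `lim_{ε⁻¹+d→∞} ln n(ε,d) / (ε^{-s} + d^t) = 0`. -/
def WeakTract (g : ℕ → ℝ) (s t : ℝ) : Prop :=
  ∀ η : ℝ, 0 < η → ∃ M : ℝ, ∀ (d : ℕ) (ε : ℝ), 1 ≤ d → 0 < ε → ε < 1 →
    M ≤ ε⁻¹ + d → Real.log (infoComp g ε d : ℝ) ≤ η * (ε ^ (-s) + (d : ℝ) ^ t)

/-!
The eigenvalues are products of geometric sequences, so
`∑_j λ_d(j)^τ = ∏_{k ≤ d} (1-ω_k)^τ / (1-ω_k^τ)` for every `τ > 0`. Keeping the eigenvalues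
above a threshold `T` and bounding both their number and the discarded tail by this sum
(a Chebyshev-type argument) gives
`ln n(ε,d) ≤ (1-τ)⁻¹ (∑_{k ≤ d} -ln(1-ω_k^τ) + 2τ ln ε⁻¹)`.
If `γ_k² → 0` the summands tend to `0`, so the sum is `o(d)`, and a small `τ` makes the second
term `o(ε^{-s})` for every `s > 0`. Conversely, if `γ_k²` decreases to a positive limit, then
`ω_k ≥ w > 0` for all `k`, every eigenvalue is at most `(1-w)^d`, and
`n(1/2,d) ≥ (3/4)(1-w)^{-d}` grows exponentially in `d`, which rules out `(s,1)`-weak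
tractability for every `s`.
-/

open Topology Finset Real

theorem hasSum_fin_pi_prod {β : Type*} {d : ℕ} {f : Fin d → β → ℝ} {a : Fin d → ℝ}
    (hf0 : ∀ k b, 0 ≤ f k b) (hf : ∀ k, HasSum (f k) (a k)) :
    HasSum (fun j : Fin d → β => ∏ k, f k (j k)) (∏ k, a k) := by
  induction d with
  | zero => simp
  | succ d ih =>
    have htail := ih (fun k => hf0 k.succ) (fun k => hf k.succ)
    have hsum :
        Summable fun p : β × (Fin d → β) => f 0 p.1 * ∏ k : Fin d, f k.succ (p.2 k) :=
      Summable.mul_of_nonneg (f := f 0) (g := fun j : Fin d → β => ∏ k : Fin d, f k.succ (j k))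
        (hf 0).summable htail.summable (hf0 0) fun j => prod_nonneg fun k _ => hf0 k.succ (j k)
    have hmul := (hf 0).mul htail hsum
    rw [Fin.prod_univ_succ, ← (Fin.consEquiv fun _ => β).hasSum_iff]
    simpa [Function.comp_def, Fin.prod_univ_succ] using hmul

theorem exists_finset_card_mul_rpow_le_and_tsum_compl_le {ι : Type*} {a : ι → ℝ}
    {τ M T : ℝ} (ha : ∀ i, 0 ≤ a i) (hτ0 : 0 < τ) (hτ1 : τ < 1)
    (hM : HasSum (fun i => a i ^ τ) M) (hT : 0 < T) :
    ∃ S : Finset ι, (#S : ℝ) * T ^ τ ≤ M ∧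
      ∑' i : {i // i ∉ S}, a i ≤ T ^ (1 - τ) * M := by
  have hfin : {i | ¬ a i ^ τ < T ^ τ}.Finite := eventually_cofinite.mp <|
    hM.summable.tendsto_cofinite_zero.eventually_lt_const (rpow_pos_of_pos hT τ)
  set S := hfin.toFinset
  have hS (i : ι) : i ∈ S ↔ T ^ τ ≤ a i ^ τ := by simp [S]
  refine ⟨S, ?_, ?_⟩
  · calc (#S : ℝ) * T ^ τ = ∑ _i ∈ S, T ^ τ := by rw [sum_const, nsmul_eq_mul]
      _ ≤ ∑ i ∈ S, a i ^ τ := sum_le_sum fun i hi => (hS i).mp hi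
      _ ≤ M := hM.tsum_eq ▸ hM.summable.sum_le_tsum _ fun i _ => rpow_nonneg (ha i) τ
  · have hsmall : ∀ i : {i // i ∉ S}, a i ≤ T ^ (1 - τ) * a i ^ τ := by
      rintro ⟨i, hi⟩
      have hiT : a i ≤ T :=
        ((rpow_lt_rpow_iff (ha i) hT.le hτ0).mp (not_le.mp (mt (hS i).mpr hi))).le
      calc a i = a i ^ (1 - τ) * a i ^ τ := by
            rw [← rpow_add' (ha i) (by norm_num), sub_add_cancel, rpow_one]
        _ ≤ T ^ (1 - τ) * a i ^ τ :=
            mul_le_mul_of_nonneg_right (rpow_le_rpow (ha i) hiT (by linarith))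
              (rpow_nonneg (ha i) τ)
    have hsub : Summable fun i : {i // i ∉ S} => a i ^ τ := hM.summable.subtype _
    calc ∑' i : {i // i ∉ S}, a i ≤ ∑' i : {i // i ∉ S}, T ^ (1 - τ) * a i ^ τ :=
          Summable.tsum_le_tsum hsmall
            (.of_nonneg_of_le (fun i => ha i) hsmall (hsub.mul_left _)) (hsub.mul_left _)
      _ = T ^ (1 - τ) * ∑' i : {i // i ∉ S}, a i ^ τ := tsum_mul_left
      _ ≤ T ^ (1 - τ) * M := by
          gcongr
          exact hM.tsum_eq ▸ hM.summable.tsum_subtype_le _ _ fun i => rpow_nonneg (ha i) τ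

theorem exists_sum_range_le_add_mul {f : ℕ → ℝ} (hf : Tendsto f atTop (𝓝 0)) {δ : ℝ}
    (hδ : 0 < δ) : ∃ C, ∀ d : ℕ, ∑ k ∈ range d, f k ≤ C + δ * d := by
  obtain ⟨K, hK⟩ := eventually_atTop.mp (hf.eventually_le_const hδ)
  refine ⟨∑ k ∈ range K, |f k|, fun d => ?_⟩
  calc ∑ k ∈ range d, f k ≤ ∑ k ∈ range d, ((if k < K then |f k| else 0) + δ) := by
        refine sum_le_sum fun k _ => ?_
        split_ifs with hk
        · linarith [le_abs_self (f k)]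
        · linarith [hK k (not_lt.mp hk)]
    _ = ∑ k ∈ (range d).filter (· < K), |f k| + δ * d := by
        rw [sum_add_distrib, sum_filter, sum_const, card_range, nsmul_eq_mul, mul_comm]
    _ ≤ ∑ k ∈ range K, |f k| + δ * d := by
        gcongr
        intro k hk
        simp only [mem_filter, mem_range] at hk ⊢
        exact hk.2

theorem exists_le_rpow_neg_add (B : ℝ) {s : ℝ} (hs : 0 < s) :
    ∃ M, ∀ ε d : ℝ, 0 < ε → 0 ≤ d → M ≤ ε⁻¹ + d → B ≤ ε ^ (-s) + d := by
  refine ⟨|B| + |B| ^ s⁻¹, fun ε d hε hd h => ?_⟩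
  rcases le_or_gt B d with hBd | hBd
  · linarith [rpow_nonneg hε.le (-s)]
  · have hε' : |B| ^ s⁻¹ ≤ ε⁻¹ := by linarith [le_abs_self B]
    calc B ≤ |B| := le_abs_self B
      _ = (|B| ^ s⁻¹) ^ s := by
          rw [← rpow_mul (abs_nonneg B), inv_mul_cancel₀ hs.ne', rpow_one]
      _ ≤ ε⁻¹ ^ s := by gcongr
      _ = ε ^ (-s) := by rw [inv_rpow hε.le, rpow_neg hε.le]
      _ ≤ ε ^ (-s) + d := le_add_of_nonneg_right hd

theorem omegaOf_denom_pos {x : ℝ} (hx : 0 < x) : 0 < 1 + 2 * x + √(1 + 4 * x) := by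
  positivity

theorem omegaOf_pos {x : ℝ} (hx : 0 < x) : 0 < omegaOf x :=
  div_pos (by positivity) (omegaOf_denom_pos hx)

theorem omegaOf_lt_one {x : ℝ} (hx : 0 < x) : omegaOf x < 1 := by
  rw [omegaOf, div_lt_one (omegaOf_denom_pos hx)]
  linarith [sqrt_pos.mpr (show (0 : ℝ) < 1 + 4 * x by linarith)]

theorem omegaOf_le_two_mul {x : ℝ} (hx : 0 < x) : omegaOf x ≤ 2 * x :=
  div_le_self (by linarith) (by linarith [sqrt_nonneg (1 + 4 * x)])

theorem div_le_omegaOf {c x X : ℝ} (hc : 0 < c) (hcx : c ≤ x) (hxX : x ≤ X) :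
    2 * c / (1 + 2 * X + √(1 + 4 * X)) ≤ omegaOf x := by
  have hx : 0 < x := hc.trans_le hcx
  have : √(1 + 4 * x) ≤ √(1 + 4 * X) := sqrt_le_sqrt (by linarith)
  exact div_le_div₀ (by linarith) (by linarith) (omegaOf_denom_pos hx) (by linarith)

theorem tendsto_omegaOf_zero {ι : Type*} {l : Filter ι} {g : ι → ℝ} (hpos : ∀ i, 0 < g i)
    (hg : Tendsto g l (𝓝 0)) : Tendsto (fun i => omegaOf (g i)) l (𝓝 0) := by
  have h2g : Tendsto (fun i => 2 * g i) l (𝓝 0) := by simpa using hg.const_mul 2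
  exact tendsto_of_tendsto_of_tendsto_of_le_of_le tendsto_const_nhds h2g
    (fun i => (omegaOf_pos (hpos i)).le) fun i => omegaOf_le_two_mul (hpos i)

section Eigen

variable {g : ℕ → ℝ} (hpos : ∀ k, 0 < g k)
include hpos

theorem eigen_nonneg (d : ℕ) (j : Fin d → ℕ) : 0 ≤ eigen g d j :=
  prod_nonneg fun k _ => mul_nonneg (sub_nonneg.mpr (omegaOf_lt_one (hpos k)).le)
    (pow_nonneg (omegaOf_pos (hpos k)).le _)

theorem eigen_le_pow {w : ℝ} (hw : ∀ k, w ≤ omegaOf (g k)) (d : ℕ) (j : Fin d → ℕ) :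
    eigen g d j ≤ (1 - w) ^ d := by
  calc eigen g d j ≤ ∏ _k : Fin d, (1 - w) := by
        refine prod_le_prod (fun k _ => mul_nonneg (sub_nonneg.mpr (omegaOf_lt_one (hpos k)).le)
          (pow_nonneg (omegaOf_pos (hpos k)).le _)) fun k _ => ?_
        have hpow : omegaOf (g k) ^ j k ≤ 1 :=
          pow_le_one₀ (omegaOf_pos (hpos k)).le (omegaOf_lt_one (hpos k)).le
        nlinarith [hw k, omegaOf_lt_one (hpos k)]
    _ = (1 - w) ^ d := by simp

theorem hasSum_eigen_rpow (d : ℕ) {τ : ℝ} (hτ : 0 < τ) :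
    HasSum (fun j => eigen g d j ^ τ)
      (∏ k : Fin d, (1 - omegaOf (g k)) ^ τ / (1 - omegaOf (g k) ^ τ)) := by
  have hω0 (k : ℕ) : 0 ≤ omegaOf (g k) := (omegaOf_pos (hpos k)).le
  have hω1 (k : ℕ) : 0 ≤ 1 - omegaOf (g k) := sub_nonneg.mpr (omegaOf_lt_one (hpos k)).le
  have hgeom (k : Fin d) :
      HasSum (fun n : ℕ => (1 - omegaOf (g k)) ^ τ * (omegaOf (g k) ^ τ) ^ n)
      ((1 - omegaOf (g k)) ^ τ / (1 - omegaOf (g k) ^ τ)) :=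
    (hasSum_geometric_of_lt_one (rpow_nonneg (hω0 k) τ)
      (rpow_lt_one (hω0 k) (omegaOf_lt_one (hpos k)) hτ)).mul_left _
  convert hasSum_fin_pi_prod (fun k n =>
    mul_nonneg (rpow_nonneg (hω1 k) τ) (pow_nonneg (rpow_nonneg (hω0 k) τ) n)) hgeom with j
  rw [eigen, ← finsetProd_rpow _ _ fun (k : Fin d) _ =>
    mul_nonneg (hω1 k) (pow_nonneg (hω0 k) _)]
  refine prod_congr rfl fun k _ => ?_
  rw [mul_rpow (hω1 k) (pow_nonneg (hω0 k) _), ← rpow_natCast, ← rpow_natCast,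
    ← rpow_mul (hω0 k), ← rpow_mul (hω0 k), mul_comm (j k : ℝ)]

theorem hasSum_eigen (d : ℕ) : HasSum (eigen g d) 1 := by
  have := hasSum_eigen_rpow hpos d one_pos
  simp only [rpow_one] at this
  rwa [prod_eq_one fun (k : Fin d) _ =>
    div_self (sub_pos.mpr (omegaOf_lt_one (hpos k))).ne'] at this

end Eigen

section InfoComp

variable {g : ℕ → ℝ}

theorem exists_finset_card_le_infoComp (d : ℕ) {ε : ℝ} (hε : 0 < ε) :
    ∃ S : Finset (Fin d → ℕ), #S ≤ infoComp g ε d ∧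
      ∑' j : {j // j ∉ S}, eigen g d j ≤ ε ^ 2 := by
  obtain ⟨S, hS⟩ := ((tendsto_tsum_compl_atTop_zero (eigen g d)).eventually_le_const
    (by positivity : (0 : ℝ) < ε ^ 2)).exists
  exact Nat.sInf_mem (s := {n | ∃ S : Finset (Fin d → ℕ), #S ≤ n ∧
    ∑' j : {j // j ∉ S}, eigen g d j ≤ ε ^ 2}) ⟨#S, S, le_rfl, hS⟩

theorem infoComp_le_card {d : ℕ} {ε : ℝ} (S : Finset (Fin d → ℕ))
    (hS : ∑' j : {j // j ∉ S}, eigen g d j ≤ ε ^ 2) : infoComp g ε d ≤ #S :=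
  Nat.sInf_le ⟨S, le_rfl, hS⟩

variable (hpos : ∀ k, 0 < g k)
include hpos

theorem one_sub_sq_le_infoComp_mul (d : ℕ) {ε b : ℝ} (hε : 0 < ε) (hb0 : 0 ≤ b)
    (hb : ∀ j, eigen g d j ≤ b) : 1 - ε ^ 2 ≤ infoComp g ε d * b := by
  obtain ⟨S, hcard, htail⟩ := exists_finset_card_le_infoComp d hε
  have hsplit := (hasSum_eigen hpos d).summable.sum_add_tsum_subtype_compl S
  rw [(hasSum_eigen hpos d).tsum_eq] at hsplit
  calc 1 - ε ^ 2 ≤ ∑ j ∈ S, eigen g d j := by linarith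
    _ ≤ #S * b := by simpa using sum_le_card_nsmul S _ b fun j _ => hb j
    _ ≤ infoComp g ε d * b := by gcongr

theorem infoComp_pos (d : ℕ) {ε : ℝ} (hε0 : 0 < ε) (hε1 : ε < 1) :
    0 < infoComp g ε d := by
  have h := one_sub_sq_le_infoComp_mul hpos d hε0 zero_le_one fun j => by
    simpa using eigen_le_pow hpos (w := 0) (fun k => (omegaOf_pos (hpos k)).le) d j
  have : 0 < (infoComp g ε d : ℝ) := by nlinarith
  exact_mod_cast this

theorem log_infoComp_le_of_hasSum (d : ℕ) {ε τ M : ℝ} (hε0 : 0 < ε) (hε1 : ε < 1)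
    (hτ0 : 0 < τ) (hτ1 : τ < 1) (hM : HasSum (fun j => eigen g d j ^ τ) M) :
    log (infoComp g ε d) ≤ (1 - τ)⁻¹ * (log M + 2 * τ * log ε⁻¹) := by
  have hM1 : 1 ≤ M := hasSum_le (fun j => self_le_rpow_of_le_one (eigen_nonneg hpos d j)
    (by simpa using eigen_le_pow hpos (w := 0) (fun k => (omegaOf_pos (hpos k)).le) d j) hτ1.le)
    (hasSum_eigen hpos d) hM
  have hM0 : 0 < M := one_pos.trans_le hM1
  have hbase : 0 < ε ^ 2 / M := by positivity
  set T := (ε ^ 2 / M) ^ (1 - τ)⁻¹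
  have hT : 0 < T := rpow_pos_of_pos hbase _
  have hTpow : T ^ (1 - τ) * M = ε ^ 2 := by
    rw [← rpow_mul hbase.le, inv_mul_cancel₀ (by linarith), rpow_one,
      div_mul_cancel₀ _ hM0.ne']
  obtain ⟨S, hcard, htail⟩ :=
    exists_finset_card_mul_rpow_le_and_tsum_compl_le (eigen_nonneg hpos d) hτ0 hτ1 hM hT
  have hn : (infoComp g ε d : ℝ) ≤ M * T ^ (-τ) := by
    refine (Nat.cast_le.mpr (infoComp_le_card S (htail.trans hTpow.le))).trans ?_
    rwa [rpow_neg hT.le, ← div_eq_mul_inv, le_div_iff₀ (rpow_pos_of_pos hT τ)]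
  calc log (infoComp g ε d) ≤ log (M * T ^ (-τ)) :=
        log_le_log (by exact_mod_cast infoComp_pos hpos d hε0 hε1) hn
    _ = (1 - τ)⁻¹ * (log M + 2 * τ * log ε⁻¹) := by
        have : (1 : ℝ) - τ ≠ 0 := by linarith
        rw [log_mul hM0.ne' (rpow_pos_of_pos hT _).ne', log_rpow hT, log_rpow hbase,
          log_div (by positivity) hM0.ne', log_pow, log_inv]
        field_simp
        ring

theorem log_prod_le_sum_range (d : ℕ) {τ : ℝ} (hτ : 0 < τ) :
    log (∏ k : Fin d, (1 - omegaOf (g k)) ^ τ / (1 - omegaOf (g k) ^ τ)) ≤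
      ∑ k ∈ range d, -log (1 - omegaOf (g k) ^ τ) := by
  have h1 (k : ℕ) : 0 < 1 - omegaOf (g k) := sub_pos.mpr (omegaOf_lt_one (hpos k))
  have h2 (k : ℕ) : 0 < 1 - omegaOf (g k) ^ τ :=
    sub_pos.mpr (rpow_lt_one (omegaOf_pos (hpos k)).le (omegaOf_lt_one (hpos k)) hτ)
  rw [log_prod fun (k : Fin d) _ => (div_pos (rpow_pos_of_pos (h1 k) τ) (h2 k)).ne',
    ← Fin.sum_univ_eq_sum_range]
  refine sum_le_sum fun k _ => ?_
  rw [log_div (rpow_pos_of_pos (h1 k) τ).ne' (h2 k).ne', log_rpow (h1 k)]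
  have : log (1 - omegaOf (g k)) ≤ 0 := log_nonpos (h1 k).le (by linarith [omegaOf_pos (hpos k)])
  nlinarith

end InfoComp

theorem log_infoComp_ge {g : ℕ → ℝ} (hpos : ∀ k, 0 < g k) {w : ℝ}
    (hw : ∀ k, w ≤ omegaOf (g k)) (hw1 : w < 1) {ε : ℝ} (hε0 : 0 < ε) (hε1 : ε < 1)
    (d : ℕ) :
    -log (1 - w) * d + log (1 - ε ^ 2) ≤ log (infoComp g ε d) := by
  have hpow : 0 < (1 - w) ^ d := pow_pos (by linarith) d
  have hε2 : 0 < 1 - ε ^ 2 := by nlinarith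
  have h := one_sub_sq_le_infoComp_mul hpos d hε0 hpow.le (eigen_le_pow hpos hw d)
  have hlog := log_le_log (div_pos hε2 hpow) ((div_le_iff₀ hpow).mpr h)
  rw [log_div hε2.ne' hpow.ne', log_pow] at hlog
  linarith

theorem not_weakTract_of_linear_le_log_infoComp {g : ℕ → ℝ} {s ε c C : ℝ} (hε0 : 0 < ε)
    (hε1 : ε < 1) (hc : 0 < c) (h : ∀ d : ℕ, c * d + C ≤ log (infoComp g ε d)) :
    ¬ WeakTract g s 1 := by
  intro hwt
  obtain ⟨M, hM⟩ := hwt (c / 2) (by positivity)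
  obtain ⟨n, hn⟩ := exists_nat_gt (max M (ε ^ (-s) - 2 * C / c))
  have hup := hM (n + 1) ε (by omega) hε0 hε1 (by
    push_cast; linarith [le_max_left M (ε ^ (-s) - 2 * C / c), inv_pos.mpr hε0])
  rw [rpow_one] at hup
  have hlow := h (n + 1)
  have hgap : c / 2 * (ε ^ (-s) - 2 * C / c) < c / 2 * n :=
    mul_lt_mul_of_pos_left ((le_max_right _ _).trans_lt hn) (by positivity)
  have : c / 2 * (ε ^ (-s) - 2 * C / c) = c / 2 * ε ^ (-s) - C := by field_simp
  push_cast at hup hlow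
  linarith

theorem tendsto_zero_of_weakTract {g : ℕ → ℝ} (hpos : ∀ k, 0 < g k) (hanti : Antitone g)
    {s : ℝ} (hwt : WeakTract g s 1) : Tendsto g atTop (𝓝 0) := by
  have hbdd : BddBelow (Set.range g) := ⟨0, by rintro _ ⟨k, rfl⟩; exact (hpos k).le⟩
  have hlim := tendsto_atTop_ciInf hanti hbdd
  rcases (le_ciInf fun k => (hpos k).le : 0 ≤ ⨅ k, g k).eq_or_lt with hc | hc
  · rwa [← hc] at hlim
  exfalso
  set w := 2 * (⨅ k, g k) / (1 + 2 * g 0 + √(1 + 4 * g 0))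
  have hw (k : ℕ) : w ≤ omegaOf (g k) := div_le_omegaOf hc (ciInf_le hbdd k) (hanti k.zero_le)
  have hw0 : 0 < w := div_pos (by positivity) (omegaOf_denom_pos (hpos 0))
  have hw1 : w < 1 := (hw 0).trans_lt (omegaOf_lt_one (hpos 0))
  exact not_weakTract_of_linear_le_log_infoComp (by norm_num : (0 : ℝ) < 1 / 2) (by norm_num)
    (neg_pos.mpr (log_neg (by linarith) (by linarith)))
    (log_infoComp_ge hpos hw hw1 (by norm_num) (by norm_num)) hwt

theorem weakTract_of_tendsto_zero {g : ℕ → ℝ} (hpos : ∀ k, 0 < g k)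
    (hg : Tendsto g atTop (𝓝 0)) {s : ℝ} (hs : 0 < s) : WeakTract g s 1 := by
  intro η hη
  set τ := min (1 / 2) (η * s / 8)
  have hτ0 : 0 < τ := lt_min (by norm_num) (by positivity)
  have hτ_half : τ ≤ 1 / 2 := min_le_left _ _
  have hτs : τ ≤ η * s / 8 := min_le_right _ _
  set f : ℕ → ℝ := fun k => -log (1 - omegaOf (g k) ^ τ)
  have hf0 (k : ℕ) : 0 ≤ f k := by
    have h0 := rpow_nonneg (omegaOf_pos (hpos k)).le τ
    have h1 := rpow_lt_one (omegaOf_pos (hpos k)).le (omegaOf_lt_one (hpos k)) hτ0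
    exact neg_nonneg.mpr (log_nonpos (by linarith) (by linarith))
  have hf : Tendsto f atTop (𝓝 0) := by
    simpa [f, zero_rpow hτ0.ne'] using ((((tendsto_omegaOf_zero hpos hg).rpow_const
      (Or.inr hτ0.le)).const_sub 1).log (by simp [zero_rpow hτ0.ne'])).neg
  obtain ⟨C, hC⟩ := exists_sum_range_le_add_mul hf (by positivity : 0 < η / 4)
  obtain ⟨M, hM⟩ := exists_le_rpow_neg_add (4 * C / η) hs
  refine ⟨M, fun d ε _ hε0 hε1 hεd => ?_⟩
  have hlogε : log ε⁻¹ ≤ ε ^ (-s) / s := by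
    simpa [inv_rpow hε0.le, rpow_neg hε0.le] using log_le_rpow_div (inv_nonneg.mpr hε0.le) hs
  have hlogε0 : 0 ≤ log ε⁻¹ := log_nonneg (one_le_inv_iff₀.mpr ⟨hε0, hε1.le⟩)
  have hτlog : 2 * τ * log ε⁻¹ ≤ η / 4 * ε ^ (-s) := calc
    2 * τ * log ε⁻¹ ≤ 2 * (η * s / 8) * (ε ^ (-s) / s) := by gcongr
    _ = η / 4 * ε ^ (-s) := by field_simp; ring
  have hCle : C ≤ η / 4 * (ε ^ (-s) + d) := by
    have := hM ε d hε0 d.cast_nonneg hεd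
    rw [div_le_iff₀ hη] at this
    linarith
  set Y := ∑ k ∈ range d, f k + 2 * τ * log ε⁻¹ with hY
  have hY0 : 0 ≤ Y := add_nonneg (sum_nonneg fun k _ => hf0 k) (by positivity)
  have hinv : (1 - τ)⁻¹ ≤ 2 := (inv_le_comm₀ (by linarith) two_pos).mpr (by linarith)
  have hlogn : log (infoComp g ε d) ≤ (1 - τ)⁻¹ * Y :=
    (log_infoComp_le_of_hasSum hpos d hε0 hε1 hτ0 (by linarith)
      (hasSum_eigen_rpow hpos d hτ0)).trans
      (mul_le_mul_of_nonneg_left (by linarith [log_prod_le_sum_range hpos d hτ0])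
        (inv_nonneg.mpr (by linarith)))
  rw [rpow_one]
  calc log (infoComp g ε d) ≤ (1 - τ)⁻¹ * Y := hlogn
    _ ≤ 2 * Y := by gcongr
    _ ≤ η * (ε ^ (-s) + d) := by linarith [hC d]

/-- For every `s > 0`: `(s,1)`-WT ⟺ WT ⟺ `lim_j γ_j² = 0`. -/
theorem stmt2 (s : ℝ) (hs : 0 < s)
    (g : ℕ → ℝ) (hpos : ∀ j, 0 < g j) (hanti : Antitone g) :
    (WeakTract g s 1 ↔ WeakTract g 1 1) ∧
    (WeakTract g 1 1 ↔ Filter.Tendsto g Filter.atTop (nhds 0)) := by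
  have hwt {t : ℝ} (ht : 0 < t) : WeakTract g t 1 ↔ Tendsto g atTop (𝓝 0) :=
    ⟨tendsto_zero_of_weakTract hpos hanti, fun h => weakTract_of_tendsto_zero hpos h ht⟩
  exact ⟨(hwt hs).trans (hwt one_pos).symm, hwt one_pos⟩
end

section
/- Let γ = (γ_j²)_{j≥1} be a nonincreasing sequence of positive reals with r(γ) > 0, where r(γ) = sup{ δ > 0 : ∑_{j=1}^∞ γ_j^{2/δ} < ∞ }. Then r(γ) = liminf_{j→∞} (ln γ_j^{−2} / ln j). -/
/-!
If `∑ g_j ^ (1/δ)` converges, then, the terms being antitone, `j * g_j ^ (1/δ) → 0`; hence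
`g_j ≤ j ^ (-δ)` eventually and the liminf is at least `δ`. Conversely, if the liminf exceeds
`δ' > δ`, then eventually `g_j ≤ (j + 1) ^ (-δ')`, so `g_j ^ (1/δ)` is dominated by the convergent
`p`-series with `p = δ' / δ > 1`.
-/

open Filter Topology

/-- `r(γ) = sup{δ > 0 : ∑_j γ_j^{2/δ} < ∞}` as an extended real, where `g j = γ_{j+1}²`
(so `γ_j^{2/δ} = (g (j-1))^{1/δ}`). -/
noncomputable def rGamma (g : ℕ → ℝ) : EReal :=
  sSup {x : EReal | ∃ δ : ℝ, 0 < δ ∧ Summable (fun j : ℕ => g j ^ (1 / δ)) ∧ x = (δ : EReal)}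

theorem Antitone.tendsto_natCast_mul_of_summable {f : ℕ → ℝ} (hf : Antitone f)
    (hs : Summable f) : Tendsto (fun n : ℕ => (n : ℝ) * f n) atTop (𝓝 0) := by
  have hnonneg : ∀ n, 0 ≤ f n := fun n => hf.le_of_tendsto hs.tendsto_atTop_zero n
  -- the terms `f k` with `n / 2 ≤ k < n` are at least `f n`, and there are at least `n / 2` of them
  have hbound : ∀ n : ℕ, (n : ℝ) * f n ≤ 2 * ∑' k, f (k + n / 2) := by
    intro n
    have hcard : (n : ℝ) ≤ 2 * ((n - n / 2 : ℕ) : ℝ) := by norm_cast; omega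
    have hblock : ((n - n / 2 : ℕ) : ℝ) * f n ≤ ∑ k ∈ Finset.range (n - n / 2), f (k + n / 2) := by
      simpa using Finset.card_nsmul_le_sum (Finset.range (n - n / 2)) (fun k => f (k + n / 2))
        (f n) fun k hk => hf (by rw [Finset.mem_range] at hk; omega)
    have htail : ∑ k ∈ Finset.range (n - n / 2), f (k + n / 2) ≤ ∑' k, f (k + n / 2) :=
      ((summable_nat_add_iff _).2 hs).sum_le_tsum _ fun k _ => hnonneg _
    nlinarith [hnonneg n]
  have htail : Tendsto (fun n : ℕ => 2 * ∑' k, f (k + n / 2)) atTop (𝓝 0) := by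
    simpa using ((tendsto_sum_nat_add f).comp (Nat.tendsto_div_const_atTop two_ne_zero)).const_mul 2
  exact tendsto_of_tendsto_of_tendsto_of_le_of_le tendsto_const_nhds htail
    (fun n => mul_nonneg n.cast_nonneg (hnonneg n)) hbound

theorem Real.tendsto_log_div_log_add_one :
    Tendsto (fun n : ℕ => Real.log n / Real.log ((n : ℝ) + 1)) atTop (𝓝 1) := by
  have hlog : Tendsto (fun n : ℕ => Real.log ((n : ℝ) + 1)) atTop atTop :=
    Real.tendsto_log_atTop.comp (tendsto_atTop_add_const_right _ 1 tendsto_natCast_atTop_atTop)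
  have hlim := (tendsto_const_nhds (x := (1 : ℝ))).sub
    (Real.tendsto_log_nat_add_one_sub_log.div_atTop hlog)
  rw [sub_zero] at hlim
  refine hlim.congr' ?_
  filter_upwards [eventually_ge_atTop 1] with n hn
  have : Real.log ((n : ℝ) + 1) ≠ 0 := (Real.log_pos (by norm_cast; omega : (1 : ℝ) < n + 1)).ne'
  field_simp
  ring

theorem Real.lt_log_inv_div_log_iff {x y b : ℝ} (hy : 0 < y) (hb : 1 < b) :
    x < Real.log y⁻¹ / Real.log b ↔ y < b ^ (-x) := by
  rw [lt_div_iff₀ (Real.log_pos hb), ← Real.log_lt_log_iff hy (by positivity),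
    Real.log_rpow (by positivity), Real.log_inv]
  constructor <;> intro h <;> linarith

theorem Real.mul_log_le_log_inv_of_mul_rpow_le_one {x y δ : ℝ} (hx : 0 < x) (hy : 0 < y)
    (hδ : 0 < δ) (h : x * y ^ (1 / δ) ≤ 1) : δ * Real.log x ≤ Real.log y⁻¹ := by
  have hlog := Real.log_nonpos (by positivity) h
  rw [Real.log_mul hx.ne' (Real.rpow_pos_of_pos hy _).ne', Real.log_rpow hy] at hlog
  rw [Real.log_inv]
  have := mul_le_mul_of_nonneg_left hlog hδ.le
  field_simp at this
  linarith

section DecayExponent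

variable {g : ℕ → ℝ} {δ : ℝ}

theorem le_liminf_log_inv_div_log_of_summable_rpow (hpos : ∀ j, 0 < g j) (hanti : Antitone g)
    (hδ : 0 < δ) (hs : Summable fun j => g j ^ (1 / δ)) :
    (δ : EReal) ≤ liminf
      (fun j : ℕ => ((Real.log (g j)⁻¹ / Real.log ((j : ℝ) + 1) : ℝ) : EReal)) atTop := by
  have hanti' : Antitone fun j => g j ^ (1 / δ) := fun i j hij =>
    Real.rpow_le_rpow (hpos j).le (hanti hij) (by positivity)
  have hsmall := (hanti'.tendsto_natCast_mul_of_summable hs).eventually_lt_const one_pos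
  have hlower : ∀ᶠ j : ℕ in atTop, ((δ * (Real.log j / Real.log ((j : ℝ) + 1)) : ℝ) : EReal) ≤
      ((Real.log (g j)⁻¹ / Real.log ((j : ℝ) + 1) : ℝ) : EReal) := by
    filter_upwards [hsmall, eventually_ge_atTop 1] with j hj hj1
    have hj1' : (1 : ℝ) ≤ j := by exact_mod_cast hj1
    rw [EReal.coe_le_coe_iff, ← mul_div_assoc]
    exact div_le_div_of_nonneg_right (Real.mul_log_le_log_inv_of_mul_rpow_le_one
      (by positivity) (hpos j) hδ hj.le) (Real.log_nonneg (by linarith))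
  have hlim : Tendsto (fun j : ℕ => ((δ * (Real.log j / Real.log ((j : ℝ) + 1)) : ℝ) : EReal))
      atTop (𝓝 (δ : EReal)) := by
    simpa using EReal.tendsto_coe.2 (Real.tendsto_log_div_log_add_one.const_mul δ)
  exact hlim.liminf_eq.symm.trans_le (liminf_le_liminf hlower)

theorem summable_rpow_of_lt_liminf_log_inv_div_log (hpos : ∀ j, 0 < g j) (hδ : 0 < δ)
    (h : (δ : EReal) < liminf
      (fun j : ℕ => ((Real.log (g j)⁻¹ / Real.log ((j : ℝ) + 1) : ℝ) : EReal)) atTop) :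
    Summable fun j => g j ^ (1 / δ) := by
  obtain ⟨δ', hδδ', hδ'⟩ := EReal.exists_between_coe_real h
  have hp : 1 < δ' / δ := (one_lt_div hδ).2 (EReal.coe_lt_coe_iff.1 hδδ')
  have hmajor : Summable fun j : ℕ => ((j : ℝ) + 1) ^ (-(δ' / δ)) := by
    simpa using (summable_nat_add_iff 1).2 (Real.summable_nat_rpow.2 (by linarith))
  refine hmajor.of_norm_bounded_eventually_nat ?_
  filter_upwards [eventually_lt_of_lt_liminf hδ', eventually_ge_atTop 1] with j hj hj1
  have hj1' : (1 : ℝ) ≤ j := by exact_mod_cast hj1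
  have hgj := (Real.lt_log_inv_div_log_iff (hpos j) (by linarith)).1 (EReal.coe_lt_coe_iff.1 hj)
  rw [Real.norm_of_nonneg (Real.rpow_nonneg (hpos j).le _),
    show -(δ' / δ) = -δ' * (1 / δ) by ring, Real.rpow_mul (by positivity)]
  exact Real.rpow_le_rpow (hpos j).le hgj.le (by positivity)

end DecayExponent

/-- If `r(γ) > 0` then `r(γ) = liminf_{j→∞} ln γ_j⁻² / ln j`. -/
theorem stmt12 (g : ℕ → ℝ) (hpos : ∀ j, 0 < g j) (hanti : Antitone g)
    (hr : 0 < rGamma g) :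
    rGamma g = Filter.liminf
      (fun j : ℕ => ((Real.log (g j)⁻¹ / Real.log ((j : ℝ) + 1) : ℝ) : EReal))
      Filter.atTop := by
  apply le_antisymm
  · refine sSup_le ?_
    rintro _ ⟨δ, hδ, hs, rfl⟩
    exact le_liminf_log_inv_div_log_of_summable_rpow hpos hanti hδ hs
  · by_contra! hlt
    obtain ⟨δ, hrδ, hδ⟩ := EReal.exists_between_coe_real hlt
    have hδpos : 0 < δ := EReal.coe_pos.1 (hr.trans hrδ)
    exact hrδ.not_ge
      (le_sSup ⟨δ, hδpos, summable_rpow_of_lt_liminf_log_inv_div_log hpos hδpos hδ, rfl⟩)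
end

section
/- Let γ = (γ_j²)_{j≥1} be a nonincreasing sequence of positive reals. The following are equivalent: (a) liminf_{j→∞} (ln γ_j^{−2} / ln j) ≥ 1; (b) for every t ∈ (0,1), lim_{j→∞} j^{1−t} γ_j² ln⁺(γ_j^{−2}) = 0; (c) for every t ∈ (0,1), lim_{j→∞} j^{1−t} γ_j² = 0. -/
open Filter Real

/-!
Condition (a) says exactly that `γ_j² < j ^ (-c)` eventually, for every `c < 1`. This polynomial
decay gives (c) (compare exponents), and conversely (c) at `t` gives decay at every `c < 1 - t`.
The factor `ln⁺ γ_j⁻²` in (b) costs only an arbitrarily small power of `γ_j²`, because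
`ln x⁻¹ ≤ x ^ (-δ) / δ`; so (b) follows from decay at `c = 1 - t/2` with `δ = t/2`.
-/

lemma Real.lt_log_inv_div_log_iff_s13 {n x c : ℝ} (hn : 1 < n) (hx : 0 < x) :
    c < log x⁻¹ / log n ↔ x < n ^ (-c) := by
  rw [lt_div_iff₀ (log_pos hn), ← log_lt_log_iff hx (rpow_pos_of_pos (by linarith) _),
    log_rpow (by linarith), log_inv]
  constructor <;> intro h <;> linarith

lemma EReal.coe_le_liminf_coe_iff {α : Type*} {f : Filter α} (x : ℝ) (u : α → ℝ) :
    (x : EReal) ≤ liminf (fun a => (u a : EReal)) f ↔ ∀ c : ℝ, c < x → ∀ᶠ a in f, c < u a := by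
  rw [le_liminf_iff]
  refine ⟨fun h c hc => (h c (mod_cast hc)).mono fun _ => EReal.coe_lt_coe_iff.mp, fun h y hy => ?_⟩
  induction y using EReal.rec with
  | bot => exact Eventually.of_forall fun _ => bot_lt_coe _
  | coe c => exact (h c (mod_cast hy)).mono fun _ => EReal.coe_lt_coe_iff.mpr
  | top => exact absurd hy (not_lt.mpr le_top)

lemma mul_max_one_log_inv_le_rpow {x δ : ℝ} (hx0 : 0 < x) (hx1 : x ≤ 1) (hδ0 : 0 < δ) (hδ1 : δ ≤ 1) :
    x * max 1 (log x⁻¹) ≤ x ^ (1 - δ) / δ := by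
  have hlog : log x⁻¹ ≤ x ^ (-δ) / δ := by
    simpa [inv_rpow hx0.le, rpow_neg hx0.le] using log_le_rpow_div (inv_nonneg.mpr hx0.le) hδ0
  have hone : 1 ≤ x ^ (-δ) / δ :=
    (one_le_div hδ0).mpr (hδ1.trans (one_le_rpow_of_pos_of_le_one_of_nonpos hx0 hx1 (by linarith)))
  calc x * max 1 (log x⁻¹) ≤ x * (x ^ (-δ) / δ) := by gcongr; exact max_le hone hlog
    _ = x ^ (1 - δ) / δ := by rw [sub_eq_add_neg, rpow_add hx0, rpow_one, mul_div_assoc]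

lemma tendsto_natCast_add_one_rpow_neg {a : ℝ} (ha : 0 < a) :
    Tendsto (fun j : ℕ => ((j : ℝ) + 1) ^ (-a)) atTop (nhds 0) :=
  (tendsto_rpow_neg_atTop ha).comp (tendsto_atTop_add_const_right _ 1 tendsto_natCast_atTop_atTop)

section

variable {g : ℕ → ℝ}

lemma one_le_liminf_log_inv_div_log_iff (hg : ∀ j, 0 < g j) :
    1 ≤ liminf (fun j : ℕ => ((log (g j)⁻¹ / log ((j : ℝ) + 1) : ℝ) : EReal)) atTop ↔
      ∀ c : ℝ, c < 1 → ∀ᶠ j : ℕ in atTop, g j < ((j : ℝ) + 1) ^ (-c) := by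
  rw [← EReal.coe_one, EReal.coe_le_liminf_coe_iff]
  refine forall₂_congr fun c _ => eventually_congr ?_
  filter_upwards [eventually_ge_atTop 1] with j hj
  exact lt_log_inv_div_log_iff_s13 (by norm_cast; omega) (hg j)

lemma tendsto_rpow_mul_mul_max_one_log_inv (hg : ∀ j, 0 < g j)
    (hdecay : ∀ c : ℝ, c < 1 → ∀ᶠ j : ℕ in atTop, g j < ((j : ℝ) + 1) ^ (-c))
    {t : ℝ} (ht0 : 0 < t) (ht1 : t < 1) :
    Tendsto (fun j : ℕ => ((j : ℝ) + 1) ^ (1 - t) * g j * max 1 (log (g j)⁻¹)) atTop (nhds 0) := by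
  have hδ0 : 0 < t / 2 := by linarith
  have hbound : ∀ᶠ j : ℕ in atTop, ((j : ℝ) + 1) ^ (1 - t) * g j * max 1 (log (g j)⁻¹) ≤
      ((j : ℝ) + 1) ^ (-(t ^ 2 / 4)) / (t / 2) := by
    filter_upwards [hdecay (1 - t / 2) (by linarith)] with j hj
    have hn : (1 : ℝ) ≤ (j : ℝ) + 1 := by linarith [j.cast_nonneg (α := ℝ)]
    have hg1 : g j ≤ 1 := hj.le.trans (rpow_le_one_of_one_le_of_nonpos hn (by linarith))
    calc ((j : ℝ) + 1) ^ (1 - t) * g j * max 1 (log (g j)⁻¹)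
        ≤ ((j : ℝ) + 1) ^ (1 - t) * (g j ^ (1 - t / 2) / (t / 2)) := by
          rw [mul_assoc]
          gcongr
          exact mul_max_one_log_inv_le_rpow (hg j) hg1 hδ0 (by linarith)
      _ ≤ ((j : ℝ) + 1) ^ (1 - t) * ((((j : ℝ) + 1) ^ (-(1 - t / 2))) ^ (1 - t / 2) / (t / 2)) := by
          gcongr
          · exact (hg j).le
          · linarith
      _ = ((j : ℝ) + 1) ^ (-(t ^ 2 / 4)) / (t / 2) := by
          rw [← rpow_mul (by linarith), mul_div_assoc', ← rpow_add (by linarith)]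
          ring_nf
  refine squeeze_zero' (Eventually.of_forall fun j => ?_) hbound ?_
  · have := hg j
    positivity
  · simpa using (tendsto_natCast_add_one_rpow_neg (by positivity : 0 < t ^ 2 / 4)).div_const (t / 2)

lemma tendsto_rpow_mul_of_tendsto_rpow_mul_mul_max_one_log_inv (hg : ∀ j, 0 ≤ g j) {t : ℝ}
    (h : Tendsto (fun j : ℕ => ((j : ℝ) + 1) ^ (1 - t) * g j * max 1 (log (g j)⁻¹)) atTop (nhds 0)) :
    Tendsto (fun j : ℕ => ((j : ℝ) + 1) ^ (1 - t) * g j) atTop (nhds 0) := by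
  refine squeeze_zero (fun j => ?_) (fun j => ?_) h
  · have := hg j
    positivity
  · have := hg j
    exact le_mul_of_one_le_right (by positivity) (le_max_left _ _)

lemma forall_eventually_lt_rpow_neg_of_tendsto_rpow_mul
    (h : ∀ t : ℝ, 0 < t → t < 1 →
      Tendsto (fun j : ℕ => ((j : ℝ) + 1) ^ (1 - t) * g j) atTop (nhds 0))
    : ∀ c : ℝ, c < 1 → ∀ᶠ j : ℕ in atTop, g j < ((j : ℝ) + 1) ^ (-c) := by
  intro c hc
  obtain ⟨t, ht0, ht1, hct⟩ : ∃ t : ℝ, 0 < t ∧ t < 1 ∧ c ≤ 1 - t :=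
    ⟨(1 - max c 0) / 2, by linarith [max_lt hc one_pos], by linarith [le_max_right c 0],
      by linarith [le_max_left c 0, max_lt hc one_pos]⟩
  filter_upwards [(h t ht0 ht1).eventually (eventually_lt_nhds one_pos)] with j hj
  have hn : (1 : ℝ) ≤ (j : ℝ) + 1 := by linarith [j.cast_nonneg (α := ℝ)]
  calc g j < ((j : ℝ) + 1) ^ (-(1 - t)) := by
        rwa [rpow_neg (by linarith), ← one_div, lt_div_iff₀' (rpow_pos_of_pos (by linarith) _)]
    _ ≤ ((j : ℝ) + 1) ^ (-c) := rpow_le_rpow_of_exponent_le hn (by linarith)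

end

theorem stmt13_general (g : ℕ → ℝ) (hpos : ∀ j, 0 < g j) :
    ((1 ≤ Filter.liminf
        (fun j : ℕ => ((Real.log (g j)⁻¹ / Real.log ((j : ℝ) + 1) : ℝ) : EReal))
        Filter.atTop) ↔
      (∀ t : ℝ, 0 < t → t < 1 →
        Filter.Tendsto
          (fun j : ℕ => ((j : ℝ) + 1) ^ (1 - t) * g j * max 1 (Real.log (g j)⁻¹))
          Filter.atTop (nhds 0))) ∧
    ((∀ t : ℝ, 0 < t → t < 1 →
        Filter.Tendsto
          (fun j : ℕ => ((j : ℝ) + 1) ^ (1 - t) * g j * max 1 (Real.log (g j)⁻¹))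
          Filter.atTop (nhds 0)) ↔
      (∀ t : ℝ, 0 < t → t < 1 →
        Filter.Tendsto (fun j : ℕ => ((j : ℝ) + 1) ^ (1 - t) * g j)
          Filter.atTop (nhds 0))) := by
  have hnonneg j : 0 ≤ g j := (hpos j).le
  rw [one_le_liminf_log_inv_div_log_iff hpos]
  refine ⟨⟨fun ha t ht0 ht1 => tendsto_rpow_mul_mul_max_one_log_inv hpos ha ht0 ht1, fun hb => ?_⟩,
    ⟨fun hb t ht0 ht1 => ?_, fun hc t ht0 ht1 => ?_⟩⟩
  · exact forall_eventually_lt_rpow_neg_of_tendsto_rpow_mul fun t ht0 ht1 =>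
      tendsto_rpow_mul_of_tendsto_rpow_mul_mul_max_one_log_inv hnonneg (hb t ht0 ht1)
  · exact tendsto_rpow_mul_of_tendsto_rpow_mul_mul_max_one_log_inv hnonneg (hb t ht0 ht1)
  · exact tendsto_rpow_mul_mul_max_one_log_inv hpos
      (forall_eventually_lt_rpow_neg_of_tendsto_rpow_mul hc) ht0 ht1

/-- For a nonincreasing sequence `g j = γ_{j+1}² > 0`, the following are equivalent:
(a) `liminf_j ln γ_j⁻² / ln j ≥ 1`;
(b) for every `t ∈ (0,1)`, `lim_j j^{1-t} γ_j² ln⁺(γ_j⁻²) = 0`;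
(c) for every `t ∈ (0,1)`, `lim_j j^{1-t} γ_j² = 0`. -/
theorem stmt13 (g : ℕ → ℝ) (hpos : ∀ j, 0 < g j) (hanti : Antitone g) :
    ((1 ≤ Filter.liminf
        (fun j : ℕ => ((Real.log (g j)⁻¹ / Real.log ((j : ℝ) + 1) : ℝ) : EReal))
        Filter.atTop) ↔
      (∀ t : ℝ, 0 < t → t < 1 →
        Filter.Tendsto
          (fun j : ℕ => ((j : ℝ) + 1) ^ (1 - t) * g j * max 1 (Real.log (g j)⁻¹))
          Filter.atTop (nhds 0))) ∧
    ((∀ t : ℝ, 0 < t → t < 1 →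
        Filter.Tendsto
          (fun j : ℕ => ((j : ℝ) + 1) ^ (1 - t) * g j * max 1 (Real.log (g j)⁻¹))
          Filter.atTop (nhds 0)) ↔
      (∀ t : ℝ, 0 < t → t < 1 →
        Filter.Tendsto (fun j : ℕ => ((j : ℝ) + 1) ^ (1 - t) * g j)
          Filter.atTop (nhds 0))) :=
  stmt13_general g hpos
end

section
/- For every s > 0, the function f(x) = ln((1 − x^{1+s}) / (1 − x)^{1+s}) is strictly increasing on the interval (0,1). -/
/-!
Write `p = 1 + s > 1`. On `(0,1)` the function is `log (1 - x^p) - p log (1 - x)`, whose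
derivative `p / (1 - x) - p x^(p-1) / (1 - x^p)` is positive because
`x^(p-1) (1 - x) = x^(p-1) - x^p < 1 - x^p`.
-/

open Real Set

lemma strictMonoOn_Ioo_of_hasDerivAt_pos {a b : ℝ} {f f' : ℝ → ℝ}
    (hf : ∀ x ∈ Ioo a b, HasDerivAt f (f' x) x) (hf' : ∀ x ∈ Ioo a b, 0 < f' x) :
    StrictMonoOn f (Ioo a b) :=
  strictMonoOn_of_deriv_pos (convex_Ioo a b)
    (fun x hx => (hf x hx).continuousAt.continuousWithinAt)
    (fun x hx => by rw [interior_Ioo] at hx; rw [(hf x hx).deriv]; exact hf' x hx)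

lemma rpow_sub_one_mul_one_sub_lt_one_sub_rpow {p x : ℝ} (hp : 1 < p) (hx0 : 0 < x)
    (hx1 : x < 1) : x ^ (p - 1) * (1 - x) < 1 - x ^ p := by
  have hlt : x ^ (p - 1) < 1 := rpow_lt_one hx0.le hx1 (sub_pos.2 hp)
  have hmul : x ^ (p - 1) * x = x ^ p := by
    rw [← rpow_add_one hx0.ne', sub_add_cancel]
  linarith

lemma hasDerivAt_log_one_sub_rpow {p x : ℝ} (hx : 0 < x) (hxp : x ^ p < 1) :
    HasDerivAt (fun y => log (1 - y ^ p)) (-(p * x ^ (p - 1)) / (1 - x ^ p)) x :=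
  ((hasDerivAt_rpow_const (Or.inl hx.ne')).const_sub 1).log (sub_pos.2 hxp).ne'

lemma hasDerivAt_log_one_sub {x : ℝ} (hx : x < 1) :
    HasDerivAt (fun y => log (1 - y)) (-1 / (1 - x)) x :=
  ((hasDerivAt_id' x).const_sub 1).log (sub_pos.2 hx).ne'

theorem strictMonoOn_log_one_sub_rpow_sub_mul_log_one_sub {p : ℝ} (hp : 1 < p) :
    StrictMonoOn (fun x => log (1 - x ^ p) - p * log (1 - x)) (Ioo 0 1) := by
  apply strictMonoOn_Ioo_of_hasDerivAt_pos
  · rintro x ⟨hx0, hx1⟩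
    exact (hasDerivAt_log_one_sub_rpow hx0 (rpow_lt_one hx0.le hx1 (by linarith))).sub
      ((hasDerivAt_log_one_sub hx1).const_mul p)
  rintro x ⟨hx0, hx1⟩
  have hxp : 0 < 1 - x ^ p := sub_pos.2 (rpow_lt_one hx0.le hx1 (by linarith))
  have hx : 0 < 1 - x := sub_pos.2 hx1
  have hcross := mul_lt_mul_of_pos_left (rpow_sub_one_mul_one_sub_lt_one_sub_rpow hp hx0 hx1)
    (zero_lt_one.trans hp)
  have hlt : p * x ^ (p - 1) / (1 - x ^ p) < p / (1 - x) := by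
    rw [div_lt_div_iff₀ hxp hx]; linarith
  rw [neg_div, neg_div, mul_neg, mul_one_div]
  linarith

/-- For every `s > 0`, `x ↦ ln((1 - x^{1+s})/(1-x)^{1+s})` is strictly increasing on `(0,1)`. -/
theorem stmt16 (s : ℝ) (hs : 0 < s) :
    StrictMonoOn (fun x : ℝ => Real.log ((1 - x ^ (1 + s)) / (1 - x) ^ (1 + s)))
      (Set.Ioo (0 : ℝ) 1) := by
  refine (strictMonoOn_log_one_sub_rpow_sub_mul_log_one_sub (by linarith : 1 < 1 + s)).congr ?_
  rintro x ⟨hx0, hx1⟩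
  have hxp : 0 < 1 - x ^ (1 + s) := sub_pos.2 (rpow_lt_one hx0.le hx1 (by linarith))
  have hx : 0 < 1 - x := sub_pos.2 hx1
  dsimp only
  rw [log_div hxp.ne' (rpow_pos_of_pos hx _).ne', log_rpow hx]
end
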